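/- arXiv:1810.09486 — 4 statements merged into one kernel-verified Lean document; each statement's English description precedes it below -/
import Mathlib

section
/- Let G be a group acting by homeomorphisms on a compact metrizable space M with the convergence property: for every sequence (gₙ) of distinct elements of G there exist a subsequence and points a, b ∈ M such that the subsequence converges to the constant map b locally uniformly on M \ {a}. Let A⁻, A⁺ be disjoint closed subsets of M, and let B₁, C₁, B₂, C₂ ⊆ M be sets such that for each i there exist open sets Vᵢ ⊇ Bᵢ and Uᵢ ⊇ Cᵢ with closure(Vᵢ) ∩ closure(Uᵢ) = ∅. Then the set {g ∈ G : gA⁻ ∩ B₁ ≠ ∅, gA⁻ ∩ C₁ ≠ ∅, gA⁺ ∩ B₂ ≠ ∅, gA⁺ ∩ C₂ ≠ ∅} is finite. -/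
open Filter Set Pointwise

/-- A group action on a topological space has the convergence property if every sequence of
distinct elements has a subsequence converging locally uniformly on the complement of a
(repelling) point `a` to a constant (attracting) point `b`. -/
def ConvergenceAction (G M : Type*) [Group G] [TopologicalSpace M] [MulAction G M] : Prop :=
  ∀ g : ℕ → G, Function.Injective g →
    ∃ φ : ℕ → ℕ, StrictMono φ ∧ ∃ a b : M,
      ∀ K : Set M, IsCompact K → K ⊆ {a}ᶜ →
        ∀ U ∈ nhds b, ∀ᶠ n in atTop, (g (φ n)) • K ⊆ U

/-!
If infinitely many translates `g • A` met both `B₁, C₁` (for `A = A⁻`) and `B₂, C₂`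
(for `A = A⁺`), a convergence subsequence with repelling point `a` and attracting point `b`
exists among them. Since `A⁻` and `A⁺` are disjoint, one of them, say `A`, avoids `a`, so the
translates of the compact set `A` eventually lie in any neighbourhood of `b`. As `B` and `C`
have disjoint closures, `b` misses one of them, and the translates of `A` eventually miss it too.
-/

section ConvergenceSequence

variable {G M : Type*} [Group G] [TopologicalSpace M] [MulAction G M]

theorem ConvergenceAction.exists_seq_of_infinite (hconv : ConvergenceAction G M) {S : Set G}
    (hS : S.Infinite) :
    ∃ g : ℕ → G, (∀ n, g n ∈ S) ∧ ∃ a b : M,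
      ∀ K : Set M, IsCompact K → K ⊆ {a}ᶜ → ∀ U ∈ nhds b, ∀ᶠ n in atTop, g n • K ⊆ U := by
  let e := hS.natEmbedding
  obtain ⟨φ, -, a, b, hab⟩ := hconv (fun n => (e n : G)) (Subtype.val_injective.comp e.injective)
  exact ⟨fun n => e (φ n), fun n => (e (φ n)).2, a, b, hab⟩

variable {g : ℕ → G} {a b : M}
  (hab : ∀ K : Set M, IsCompact K → K ⊆ {a}ᶜ → ∀ U ∈ nhds b, ∀ᶠ n in atTop, g n • K ⊆ U)
include hab

theorem eventually_disjoint_smul_of_notMem_closure {A B : Set M} (hA : IsCompact A)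
    (ha : a ∉ A) (hb : b ∉ closure B) : ∀ᶠ n in atTop, Disjoint (g n • A) B := by
  have hA_sub : A ⊆ {a}ᶜ := fun x hx hxa => ha (mem_singleton_iff.mp hxa ▸ hx)
  filter_upwards [hab A hA hA_sub _ (isClosed_closure.isOpen_compl.mem_nhds hb)] with n hn
  exact disjoint_compl_left.mono hn subset_closure

theorem eventually_not_meets_both {A B C : Set M} (hA : IsCompact A) (ha : a ∉ A)
    (hBC : Disjoint (closure B) (closure C)) :
    ∀ᶠ n in atTop, ¬ ((g n • A ∩ B).Nonempty ∧ (g n • A ∩ C).Nonempty) := by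
  rcases em (b ∈ closure B) with hbB | hbB
  · have hbC : b ∉ closure C := disjoint_left.mp hBC hbB
    filter_upwards [eventually_disjoint_smul_of_notMem_closure hab hA ha hbC] with n hn
    exact fun h => not_nonempty_iff_eq_empty.mpr hn.inter_eq h.2
  · filter_upwards [eventually_disjoint_smul_of_notMem_closure hab hA ha hbB] with n hn
    exact fun h => not_nonempty_iff_eq_empty.mpr hn.inter_eq h.1

end ConvergenceSequence

theorem disjoint_closure_of_subset_of_closure_inter_eq_empty {X : Type*} [TopologicalSpace X]
    {B C V U : Set X} (hBV : B ⊆ V) (hCU : C ⊆ U) (hVU : closure V ∩ closure U = ∅) :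
    Disjoint (closure B) (closure C) :=
  (disjoint_iff_inter_eq_empty.mpr hVU).mono (closure_mono hBV) (closure_mono hCU)

theorem finiteness_of_annulus_translates_general
    {G M : Type*} [Group G] [TopologicalSpace M] [CompactSpace M]
    [MulAction G M]
    (hconv : ConvergenceAction G M)
    (Am Ap : Set M) (hAm : IsClosed Am) (hAp : IsClosed Ap) (hdisj : Disjoint Am Ap)
    (B₁ C₁ B₂ C₂ : Set M)
    (hsep : ∀ i : Fin 2,
      ∃ V U : Set M, IsOpen V ∧ IsOpen U ∧
        (if i = 0 then B₁ else B₂) ⊆ V ∧ (if i = 0 then C₁ else C₂) ⊆ U ∧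
        closure V ∩ closure U = ∅) :
    {g : G | (g • Am ∩ B₁).Nonempty ∧ (g • Am ∩ C₁).Nonempty ∧
             (g • Ap ∩ B₂).Nonempty ∧ (g • Ap ∩ C₂).Nonempty}.Finite := by
  refine not_not.mp fun hinf => ?_
  obtain ⟨g, hgS, a, b, hab⟩ := hconv.exists_seq_of_infinite hinf
  obtain ⟨V₁, U₁, -, -, hBV₁, hCU₁, hVU₁⟩ := hsep 0
  obtain ⟨V₂, U₂, -, -, hBV₂, hCU₂, hVU₂⟩ := hsep 1
  simp only [Fin.isValue, ↓reduceIte, Fin.one_eq_zero_iff, OfNat.ofNat_ne_one]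
    at hBV₁ hCU₁ hBV₂ hCU₂
  have h₁ := disjoint_closure_of_subset_of_closure_inter_eq_empty hBV₁ hCU₁ hVU₁
  have h₂ := disjoint_closure_of_subset_of_closure_inter_eq_empty hBV₂ hCU₂ hVU₂
  by_cases ha : a ∈ Am
  · have ha' : a ∉ Ap := disjoint_left.mp hdisj ha
    obtain ⟨n, hn⟩ := (eventually_not_meets_both hab hAp.isCompact ha' h₂).exists
    exact hn (hgS n).2.2
  · obtain ⟨n, hn⟩ := (eventually_not_meets_both hab hAm.isCompact ha h₁).exists
    exact hn ⟨(hgS n).1, (hgS n).2.1⟩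

theorem finiteness_of_annulus_translates
    {G M : Type*} [Group G] [TopologicalSpace M] [CompactSpace M]
    [TopologicalSpace.MetrizableSpace M] [MulAction G M]
    (hcont : ∀ g : G, Continuous fun m : M => g • m)
    (hconv : ConvergenceAction G M)
    (Am Ap : Set M) (hAm : IsClosed Am) (hAp : IsClosed Ap) (hdisj : Disjoint Am Ap)
    (B₁ C₁ B₂ C₂ : Set M)
    (hsep : ∀ i : Fin 2,
      ∃ V U : Set M, IsOpen V ∧ IsOpen U ∧
        (if i = 0 then B₁ else B₂) ⊆ V ∧ (if i = 0 then C₁ else C₂) ⊆ U ∧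
        closure V ∩ closure U = ∅) :
    {g : G | (g • Am ∩ B₁).Nonempty ∧ (g • Am ∩ C₁).Nonempty ∧
             (g • Ap ∩ B₂).Nonempty ∧ (g • Ap ∩ C₂).Nonempty}.Finite :=
  finiteness_of_annulus_translates_general hconv Am Ap hAm hAp hdisj B₁ C₁ B₂ C₂ hsep
end

section
/- Let (Q, ρ) be a hyperbolic path quasimetric space and let G act on Q by isometries with a loxodromic element g (i.e., n ↦ gⁿx is a quasi-isometric embedding of ℤ). Then there exist N ∈ ℕ and M > 0 such that for every n ∈ ℕ, inf_{x ∈ Q} ρ(x, g^{nN} x) ≥ nM. -/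
open Set

/-- A finite sequence is an `s`-geodesic segment if
`|i−j| − s ≤ ρ(xᵢ,xⱼ) ≤ |i−j| + s` for all indices. -/
def IsGeodSeg {Q : Type*} (ρ : Q → Q → ℝ) (s : ℝ) {n : ℕ} (x : Fin (n + 1) → Q) : Prop :=
  ∀ i j : Fin (n + 1),
    |(i : ℝ) - (j : ℝ)| - s ≤ ρ (x i) (x j) ∧ ρ (x i) (x j) ≤ |(i : ℝ) - (j : ℝ)| + s

/-- An `s`-geodesic segment from `a` to `b`. -/
def IsGeodSegBetween {Q : Type*} (ρ : Q → Q → ℝ) (s : ℝ) {n : ℕ}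
    (x : Fin (n + 1) → Q) (a b : Q) : Prop :=
  IsGeodSeg ρ s x ∧ x 0 = a ∧ x (Fin.last n) = b

/-! For an isometric action on an `r`-quasimetric space, displacement is subadditive up to `r`:
`ρ(x, hᵏx) ≤ k (ρ(x, hx) + r)`. Moving the base point from `x₀` to `x` costs a bounded amount, so
the linear lower bound `ρ(x₀, gⁿx₀) ≥ n / L - C` forces `k (ρ(x, gᵐx) + r) ≥ k m / L - const`
for all `k`, i.e. `ρ(x, gᵐx) ≥ m / L - r`. Taking `N ≥ L (r + 1)` makes this at least `n` for
`m = nN`. -/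

theorem le_of_forall_nat_mul_le_mul_add {a b c : ℝ} (h : ∀ k : ℕ, k * a ≤ k * b + c) : a ≤ b := by
  by_contra! hba
  obtain ⟨k, hk⟩ := exists_nat_gt (c / (a - b))
  rw [div_lt_iff₀ (sub_pos.mpr hba)] at hk
  linarith [h k]

section IsometricAction

variable {Q G : Type*} [Group G] [MulAction G Q] {ρ : Q → Q → ℝ} {r : ℝ}

theorem dist_pow_smul_le (hzero : ∀ x, ρ x x = 0) (htri : ∀ x y z, ρ x y ≤ ρ x z + ρ z y + r)
    (hiso : ∀ (g : G) (x y : Q), ρ (g • x) (g • y) = ρ x y) (h : G) (x : Q) (k : ℕ) :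
    ρ x (h ^ k • x) ≤ k * (ρ x (h • x) + r) := by
  induction k with
  | zero => simp [hzero]
  | succ k ih =>
    calc ρ x (h ^ (k + 1) • x)
        ≤ ρ x (h ^ k • x) + ρ (h ^ k • x) (h ^ k • h • x) + r := by
          rw [pow_succ, mul_smul]; exact htri _ _ _
      _ ≤ (k + 1 : ℕ) * (ρ x (h • x) + r) := by
          rw [hiso]; push_cast; linarith

theorem dist_smul_le_dist_smul_add (hsymm : ∀ x y, ρ x y = ρ y x)
    (htri : ∀ x y z, ρ x y ≤ ρ x z + ρ z y + r)
    (hiso : ∀ (g : G) (x y : Q), ρ (g • x) (g • y) = ρ x y) (h : G) (x y : Q) :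
    ρ y (h • y) ≤ ρ x (h • x) + 2 * ρ x y + 2 * r := by
  have hyx := htri y (h • y) x
  have hxhy := htri x (h • y) (h • x)
  rw [hsymm y x] at hyx
  rw [hiso] at hxhy
  linarith

theorem mul_le_dist_pow_smul_add (hzero : ∀ x, ρ x x = 0) (hsymm : ∀ x y, ρ x y = ρ y x)
    (htri : ∀ x y z, ρ x y ≤ ρ x z + ρ z y + r)
    (hiso : ∀ (g : G) (x y : Q), ρ (g • x) (g • y) = ρ x y) {g : G} {a C : ℝ} {x₀ : Q}
    (hlow : ∀ n : ℕ, a * n - C ≤ ρ x₀ (g ^ n • x₀)) (m : ℕ) (x : Q) :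
    a * m ≤ ρ x (g ^ m • x) + r := by
  refine le_of_forall_nat_mul_le_mul_add (c := C + 2 * ρ x x₀ + 2 * r) fun k => ?_
  have hk := hlow (m * k)
  have hx₀ := dist_smul_le_dist_smul_add hsymm htri hiso (g ^ (m * k)) x x₀
  have hx := dist_pow_smul_le hzero htri hiso (g ^ m) x k
  rw [pow_mul] at hk hx₀
  have hkm : a * ((m * k : ℕ) : ℝ) = k * (a * m) := by push_cast; ring
  linarith

end IsometricAction

theorem loxodromic_uniform_displacement_general {Q : Type*} (ρ : Q → Q → ℝ) (r : ℝ)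
    (hr : 0 ≤ r)
    -- `ρ` is an `r`-quasimetric
    (hzero : ∀ x, ρ x x = 0)
    (hsymm : ∀ x y, ρ x y = ρ y x)
    (htri : ∀ x y z, ρ x y ≤ ρ x z + ρ z y + r)
    -- a group `G` acting by isometries
    {G : Type*} [Group G] [MulAction G Q]
    (hiso : ∀ (g : G) (x y : Q), ρ (g • x) (g • y) = ρ x y)
    -- a loxodromic element `g`
    (g : G) (L C : ℝ) (hL : 0 < L) (x₀ : Q)
    (hlox : ∀ m n : ℤ, (1 / L) * |(m : ℝ) - (n : ℝ)| - C ≤ ρ ((g ^ m) • x₀) ((g ^ n) • x₀) ∧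
      ρ ((g ^ m) • x₀) ((g ^ n) • x₀) ≤ L * |(m : ℝ) - (n : ℝ)| + C) :
    ∃ N : ℕ, 0 < N ∧ ∃ Mc : ℝ, 0 < Mc ∧
      ∀ n : ℕ, ∀ x : Q, (n : ℝ) * Mc ≤ ρ x ((g ^ (n * N)) • x) := by
  have hlow (n : ℕ) : 1 / L * n - C ≤ ρ x₀ (g ^ n • x₀) := by
    simpa using (hlox 0 n).1
  set N := ⌈L * (r + 1)⌉₊
  have hN : r + 1 ≤ N / L := (le_div_iff₀ hL).2 (by linarith [Nat.le_ceil (L * (r + 1))])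
  refine ⟨N, Nat.ceil_pos.mpr (by positivity), 1, one_pos, fun n x => ?_⟩
  rcases Nat.eq_zero_or_pos n with rfl | hn
  · simp [hzero]
  have hdisp := mul_le_dist_pow_smul_add hzero hsymm htri hiso hlow (n * N) x
  have hn1 : (1 : ℝ) ≤ n := by exact_mod_cast hn
  have hnN : 1 / L * ((n * N : ℕ) : ℝ) = n * (N / L) := by push_cast; ring
  linarith [mul_le_mul_of_nonneg_left hN n.cast_nonneg, mul_nonneg (sub_nonneg.2 hn1) hr]

theorem loxodromic_uniform_displacement {Q : Type*} (ρ : Q → Q → ℝ) (r s δ : ℝ)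
    (hr : 0 ≤ r) (hs : 0 ≤ s) (hδ : 0 ≤ δ)
    -- `ρ` is an `r`-quasimetric
    (hnonneg : ∀ x y, 0 ≤ ρ x y)
    (hzero : ∀ x, ρ x x = 0)
    (hsymm : ∀ x y, ρ x y = ρ y x)
    (htri : ∀ x y z, ρ x y ≤ ρ x z + ρ z y + r)
    -- `(Q,ρ)` is a path quasimetric space: any two points are joined by an `s`-geodesic
    (hpath : ∀ a b : Q, ∃ n : ℕ, ∃ x : Fin (n + 1) → Q, IsGeodSegBetween ρ s x a b)
    -- hyperbolicity: triangles of `s`-geodesic segments are `δ`-slim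
    (hslim : ∀ a b c : Q, ∀ n₁ n₂ n₃ : ℕ,
      ∀ x₁ : Fin (n₁ + 1) → Q, ∀ x₂ : Fin (n₂ + 1) → Q, ∀ x₃ : Fin (n₃ + 1) → Q,
      IsGeodSegBetween ρ s x₁ a b → IsGeodSegBetween ρ s x₂ b c →
      IsGeodSegBetween ρ s x₃ c a →
      ∀ i : Fin (n₁ + 1), ∃ q ∈ range x₂ ∪ range x₃, ρ (x₁ i) q ≤ δ)
    -- a group `G` acting by isometries
    {G : Type*} [Group G] [MulAction G Q]
    (hiso : ∀ (g : G) (x y : Q), ρ (g • x) (g • y) = ρ x y)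
    -- a loxodromic element `g`
    (g : G) (L C : ℝ) (hL : 0 < L) (x₀ : Q)
    (hlox : ∀ m n : ℤ, (1 / L) * |(m : ℝ) - (n : ℝ)| - C ≤ ρ ((g ^ m) • x₀) ((g ^ n) • x₀) ∧
      ρ ((g ^ m) • x₀) ((g ^ n) • x₀) ≤ L * |(m : ℝ) - (n : ℝ)| + C) :
    ∃ N : ℕ, 0 < N ∧ ∃ Mc : ℝ, 0 < Mc ∧
      ∀ n : ℕ, ∀ x : Q, (n : ℝ) * Mc ≤ ρ x ((g ^ (n * N)) • x) :=
  loxodromic_uniform_displacement_general ρ r hr hzero hsymm htri hiso g L C hL x₀ hlox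
end

section
/- Let G be a countable group acting by homeomorphisms on a metric space M, μ a probability distribution on G whose support generates G, and ν a μ-stationary probability measure on M. Suppose Y ⊆ M has the property: there is a sequence of positive numbers (εₙ) such that for every translate fY (f ∈ G) there is a sequence (gₙ) of group elements (possibly depending on f) such that the translates fY, g₁⁻¹fY, g₂⁻¹fY, … are pairwise disjoint, and for each gₙ there is m ∈ ℕ with μ^{*m}(gₙ) > εₙ. Then ν(Y) = 0. -/
open MeasureTheory Set Pointwise

/-- Convolution powers of a probability distribution `μ` on a group `G`:
`muConvPow μ 1 = μ` and `muConvPow μ (m+1) g = Σ_h μ(h) · muConvPow μ m (h⁻¹g)`. -/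
noncomputable def muConvPow {G : Type*} [Group G] [DecidableEq G] (μ : G → ENNReal) : ℕ → G → ENNReal
  | 0, g => if g = 1 then 1 else 0
  | m + 1, g => ∑' h : G, μ h * muConvPow μ m (h⁻¹ * g)

open scoped ENNReal

/-! Let `c = ⨆ f, ν (f • Y)` and suppose `c > 0`. Pick `N` with `N * c / 2 > 1` and a translate
`f • Y` whose measure is within `c / 2 * min_{n < N} ε n` of `c`. Stationarity for `μ^{*m}` writes
`ν (f • Y)` as a `μ^{*m}`-average of the measures `ν (g⁻¹ • f • Y) ≤ c`; if the term at `g = gₙ`,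
of weight `> ε n`, were at most `c / 2`, this average would fall below `ν (f • Y)`. So the `N`
pairwise disjoint sets `gₙ⁻¹ • f • Y`, `n < N`, each have measure `> c / 2`, more than `1` in total.
-/

theorem tsum_mul_add_mul_tsub_le {ι : Type*} {P x : ι → ℝ≥0∞} {c : ℝ≥0∞}
    (hP : ∑' i, P i = 1) (hx : ∀ i, x i ≤ c) (i₀ : ι) :
    ∑' i, P i * x i + P i₀ * (c - x i₀) ≤ c := by
  classical
  calc ∑' i, P i * x i + P i₀ * (c - x i₀)
      = ∑' i, (P i * x i + if i = i₀ then P i * (c - x i) else 0) := by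
        rw [ENNReal.tsum_add, tsum_ite_eq]
    _ ≤ ∑' i, P i * c := by
        refine ENNReal.tsum_le_tsum fun i => ?_
        split_ifs
        · rw [← mul_add, add_tsub_cancel_of_le (hx i)]
        · simpa using mul_le_mul_right (hx i) _
    _ = c := by rw [ENNReal.tsum_mul_right, hP, one_mul]

theorem nat_mul_le_measure_univ_of_pairwise_disjoint {M : Type*} [MeasurableSpace M]
    {ν : Measure M} {A : ℕ → Set M} (hA : ∀ n, MeasurableSet (A n))
    (hd : Pairwise fun i j => Disjoint (A i) (A j))
    {a : ℝ≥0∞} {N : ℕ} (ha : ∀ n < N, a ≤ ν (A n)) : N * a ≤ ν univ :=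
  calc (N : ℝ≥0∞) * a = ∑ _n ∈ Finset.range N, a := by simp
    _ ≤ ∑ n ∈ Finset.range N, ν (A n) :=
        Finset.sum_le_sum fun n hn => ha n (Finset.mem_range.mp hn)
    _ ≤ ν univ := sum_measure_le_measure_univ (fun n _ => (hA n).nullMeasurableSet)
        fun _ _ _ _ hij => (hd hij).aedisjoint

section

variable {G : Type*} [Group G]

theorem tsum_comp_inv_mul {α : Type*} [AddCommMonoid α] [TopologicalSpace α]
    (F : G → α) (h : G) : ∑' g, F (h⁻¹ * g) = ∑' g, F g := by
  simpa using ((Equiv.mulLeft h).tsum_eq fun g => F (h⁻¹ * g)).symm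

variable {M : Type*} [MeasurableSpace M] [MulAction G M]

def MeasureTheory.Measure.IsStationary (ν : Measure M) (μ : G → ℝ≥0∞) : Prop :=
  ∀ A : Set M, MeasurableSet A → ν A = ∑' g : G, μ g * ν ((fun m => g • m) ⁻¹' A)

theorem MeasureTheory.Measure.IsStationary.iSup_div_two_lt_measure_inv_smul
    [MeasurableConstSMul G M] {P : G → ℝ≥0∞} {ν : Measure M} (hν : ν.IsStationary P)
    (hP : ∑' g, P g = 1) {Y : Set M} (hY : MeasurableSet Y) {f g₀ : G}
    (hf : ⨆ h : G, ν (h • Y) < ν (f • Y) + (⨆ h : G, ν (h • Y)) / 2 * P g₀) :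
    (⨆ h : G, ν (h • Y)) / 2 < ν (g₀⁻¹ • f • Y) := by
  set c := ⨆ h : G, ν (h • Y)
  have hc : c ≠ ∞ := ne_top_of_lt hf
  have hle : ∀ g : G, ν (g⁻¹ • f • Y) ≤ c := fun g => by
    rw [smul_smul]
    exact le_iSup (fun h : G => ν (h • Y)) _
  have hfY : ν (f • Y) = ∑' g, P g * ν (g⁻¹ • f • Y) := by
    simpa only [preimage_smul] using hν _ (hY.const_smul f)
  by_contra! hg₀
  have hgap : c / 2 ≤ c - ν (g₀⁻¹ • f • Y) := ENNReal.sub_half hc ▸ tsub_le_tsub_left hg₀ c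
  refine hf.not_ge ?_
  calc ν (f • Y) + c / 2 * P g₀
      ≤ ∑' g, P g * ν (g⁻¹ • f • Y) + P g₀ * (c - ν (g₀⁻¹ • f • Y)) := by
        rw [hfY, mul_comm]
        gcongr
    _ ≤ c := tsum_mul_add_mul_tsub_le hP hle g₀

variable [DecidableEq G]

theorem muConvPow_succ_apply (μ : G → ℝ≥0∞) (m : ℕ) (g : G) :
    muConvPow μ (m + 1) g = ∑' h, μ h * muConvPow μ m (h⁻¹ * g) := rfl

theorem tsum_muConvPow {μ : G → ℝ≥0∞} (hμ : ∑' g, μ g = 1) (m : ℕ) :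
    ∑' g, muConvPow μ m g = 1 := by
  induction m with
  | zero => simp [muConvPow]
  | succ m ih =>
    simp only [muConvPow_succ_apply]
    rw [ENNReal.tsum_comm]
    simp only [ENNReal.tsum_mul_left, tsum_comp_inv_mul (muConvPow μ m), ih, mul_one, hμ]

theorem MeasureTheory.Measure.IsStationary.convPow [MeasurableConstSMul G M]
    {μ : G → ℝ≥0∞} {ν : Measure M}
    (hν : ν.IsStationary μ) (m : ℕ) : ν.IsStationary (muConvPow μ m) := by
  induction m with
  | zero => intro A _; simp [muConvPow, ite_mul]
  | succ m ih =>
    intro A hA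
    have hcomp : ∀ h k : G, (fun x : M => k • x) ⁻¹' ((fun x : M => h • x) ⁻¹' A)
        = (fun x : M => (h * k) • x) ⁻¹' A := fun h k => by ext; simp [mul_smul]
    calc ν A = ∑' h, μ h * ∑' k, muConvPow μ m k * ν ((fun x => (h * k) • x) ⁻¹' A) := by
          rw [hν A hA]
          refine tsum_congr fun h => ?_
          simp only [ih _ (measurable_const_smul h hA), hcomp]
      _ = ∑' h, ∑' g, μ h * (muConvPow μ m (h⁻¹ * g) * ν ((fun x => g • x) ⁻¹' A)) := by
          refine tsum_congr fun h => ?_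
          rw [← ENNReal.tsum_mul_left, eq_comm, ← tsum_comp_inv_mul _ h⁻¹]
          simp
      _ = ∑' g, muConvPow μ (m + 1) g * ν ((fun x => g • x) ⁻¹' A) := by
          rw [ENNReal.tsum_comm]
          simp only [muConvPow_succ_apply, ← ENNReal.tsum_mul_right, mul_assoc]


end

theorem zero_measure_criterion_general
    {G M : Type*} [Group G] [DecidableEq G]
    [MetricSpace M] [MeasurableSpace M] [BorelSpace M] [MulAction G M]
    (hcont : ∀ g : G, Continuous fun m : M => g • m)
    (μ : G → ENNReal) (hμ : ∑' g : G, μ g = 1)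
    (ν : Measure M) [IsProbabilityMeasure ν]
    (hstat : ∀ A : Set M, MeasurableSet A → ν A = ∑' g : G, μ g * ν ((fun m => g • m) ⁻¹' A))
    (Y : Set M) (hY : MeasurableSet Y)
    (ε : ℕ → ENNReal) (hε : ∀ n, 0 < ε n)
    (hprop : ∀ f : G, ∃ g : ℕ → G,
      (∀ n, Disjoint (f • Y) ((g n)⁻¹ • f • Y)) ∧
      (Pairwise fun i j => Disjoint ((g i)⁻¹ • f • Y) ((g j)⁻¹ • f • Y)) ∧
      (∀ n, ∃ m : ℕ, ε n < muConvPow μ m (g n))) :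
    ν Y = 0 := by
  have : MeasurableConstSMul G M := ⟨fun g => (hcont g).measurable⟩
  set c := ⨆ f : G, ν (f • Y)
  by_contra hY0
  have hYc : ν Y ≤ c := by simpa using le_iSup (fun f : G => ν (f • Y)) 1
  have hc0 : c / 2 ≠ 0 := by simpa using ne_bot_of_le_ne_bot hY0 hYc
  have hc1 : c ≠ ∞ := ne_top_of_le_ne_top ENNReal.one_ne_top (iSup_le fun _ => prob_le_one)
  obtain ⟨N, hN⟩ := ENNReal.exists_nat_mul_gt hc0 ENNReal.one_ne_top
  set δ := c / 2 * (Finset.range N).inf ε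
  have hδ0 : δ ≠ 0 := mul_ne_zero hc0 ((Finset.lt_inf_iff (by simp)).mpr fun n _ => hε n).ne'
  obtain ⟨f, hf⟩ : ∃ f : G, c < ν (f • Y) + δ :=
    lt_iSup_iff.mp (by rw [← ENNReal.iSup_add]; exact ENNReal.lt_add_right hc1 hδ0)
  obtain ⟨g, -, hdisj, hm⟩ := hprop f
  have hlarge : ∀ n < N, c / 2 ≤ ν ((g n)⁻¹ • f • Y) := fun n hn => by
    obtain ⟨m, hm⟩ := hm n
    refine ((show ν.IsStationary μ from hstat).convPow m |>.iSup_div_two_lt_measure_inv_smul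
      (tsum_muConvPow hμ m) hY (hf.trans_le ?_)).le
    show ν (f • Y) + c / 2 * _ ≤ ν (f • Y) + c / 2 * _
    gcongr
    exact (Finset.inf_le (Finset.mem_range.mpr hn)).trans hm.le
  have hsum := nat_mul_le_measure_univ_of_pairwise_disjoint
    (fun n => (hY.const_smul f).const_smul _) hdisj hlarge
  exact (hN.trans_le hsum).ne' (by simp)

theorem zero_measure_criterion
    {G M : Type*} [Group G] [Countable G] [DecidableEq G]
    [MetricSpace M] [MeasurableSpace M] [BorelSpace M] [MulAction G M]
    (hcont : ∀ g : G, Continuous fun m : M => g • m)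
    (μ : G → ENNReal) (hμ : ∑' g : G, μ g = 1)
    (hgen : Subgroup.closure {g : G | μ g ≠ 0} = ⊤)
    (ν : Measure M) [IsProbabilityMeasure ν]
    (hstat : ∀ A : Set M, MeasurableSet A → ν A = ∑' g : G, μ g * ν ((fun m => g • m) ⁻¹' A))
    (Y : Set M) (hY : MeasurableSet Y)
    (ε : ℕ → ENNReal) (hε : ∀ n, 0 < ε n)
    (hprop : ∀ f : G, ∃ g : ℕ → G,
      (∀ n, Disjoint (f • Y) ((g n)⁻¹ • f • Y)) ∧
      (Pairwise fun i j => Disjoint ((g i)⁻¹ • f • Y) ((g j)⁻¹ • f • Y)) ∧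
      (∀ n, ∃ m : ℕ, ε n < muConvPow μ m (g n))) :
    ν Y = 0 :=
  zero_measure_criterion_general hcont μ hμ ν hstat Y hY ε hε hprop
end

section
/- Let G be a convergence group acting on a compact metrizable space M. Fix a basepoint x in the space of distinct triples T and endow G ∪ M with the topology generated by the discrete open sets of G together with the sets Ũ_G := {g ∈ G : g·x has at least two components in U} ∪ U for U ⊆ M open. Then G acts on G ∪ M by homeomorphisms, where G acts on itself by left multiplication and on M by the given action; explicitly, h·Ũ_G = (hU)~_G for all h ∈ G and open U ⊆ M. -/
open Filter Set

section Triples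

variable {M : Type*} [TopologicalSpace M]

/-- The space of distinct triples of `M`. -/
def Tri (M : Type*) : Type _ :=
  {x : M × M × M // x.1 ≠ x.2.1 ∧ x.2.1 ≠ x.2.2 ∧ x.1 ≠ x.2.2}

/-- The components of a triple. -/
def comp (x : Tri M) : Fin 3 → M := ![x.val.1, x.val.2.1, x.val.2.2]

/-- At least two of the three components of `x` lie in `U`. -/
def TwoIn (U : Set M) (x : Tri M) : Prop :=
  ∃ i j : Fin 3, i ≠ j ∧ comp x i ∈ U ∧ comp x j ∈ U

variable {G : Type*} [Group G] [MulAction G M]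

/-- The diagonal action of `G` on the space of distinct triples. -/
def tact (g : G) (x : Tri M) : Tri M :=
  ⟨(g • x.val.1, g • x.val.2.1, g • x.val.2.2), by
    obtain ⟨h1, h2, h3⟩ := x.prop
    refine ⟨?_, ?_, ?_⟩ <;> simp [h1, h2, h3]⟩

/-- The basic neighbourhood `Ũ_G ⊆ G ∪ M` attached to an open set `U ⊆ M` and a basepoint
`x ∈ T`: the elements `g ∈ G` such that `g·x` has at least two components in `U`,
together with `U` itself. -/
def UG (x : Tri M) (U : Set M) : Set (G ⊕ M) :=
  (Sum.inl '' {g : G | TwoIn U (tact g x)}) ∪ (Sum.inr '' U)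

/-- The action of `h ∈ G` on the compactification `G ∪ M`: left multiplication on `G`
and the given action on `M`. -/
def pastedAct (h : G) : G ⊕ M → G ⊕ M :=
  Sum.map (fun g => h * g) (fun m => h • m)

/-- Tukia's topology on `G ∪ M`: generated by the singletons of `G` together with the
sets `Ũ_G` for `U ⊆ M` open. -/
def pastedTop (x : Tri M) : TopologicalSpace (G ⊕ M) :=
  TopologicalSpace.generateFrom
    ({s | ∃ g : G, s = {Sum.inl g}} ∪ {s | ∃ U : Set M, IsOpen U ∧ s = UG x U})

end Triples

/-!
Translation by `h` permutes the generating sets of the topology: `g • x` has two components in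
`U` iff `(h * g) • x` has two components in `h • U`, so `h` carries `Ũ_G` onto `(h • U)~_G`.
Since the preimage under translation by `h` is the image under translation by `h⁻¹`, and `h⁻¹ • U`
is open, preimages of generating sets are generating sets.
-/

open scoped Pointwise Topology

section PastedAction

variable {M G : Type*} [Group G] [MulAction G M]

lemma comp_tact (g : G) (x : Tri M) : comp (tact g x) = g • comp x := by
  funext i; fin_cases i <;> rfl

lemma tact_mul (g h : G) (x : Tri M) : tact (g * h) x = tact g (tact h x) :=
  Subtype.ext (by simp [tact, mul_smul])

lemma preimage_pastedAct (h : G) (S : Set (G ⊕ M)) :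
    pastedAct h ⁻¹' S = pastedAct h⁻¹ '' S := by
  refine (congrFun (image_eq_preimage_of_inverse (f := pastedAct h⁻¹) ?_ ?_) S).symm <;>
    intro a <;> cases a <;> simp [pastedAct]

lemma twoIn_smul_iff (g : G) (U : Set M) (x : Tri M) :
    TwoIn (g • U) (tact g x) ↔ TwoIn U x := by
  simp only [TwoIn, comp_tact, Pi.smul_apply, smul_mem_smul_set_iff]

lemma image_mul_left_setOf_twoIn (h : G) (x : Tri M) (U : Set M) :
    (h * ·) '' {g : G | TwoIn U (tact g x)} = {g | TwoIn (h • U) (tact g x)} := by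
  ext g
  rw [image_mul_left, mem_preimage, mem_ofPred_eq, mem_ofPred_eq, ← twoIn_smul_iff h,
    ← tact_mul, mul_inv_cancel_left]

lemma image_pastedAct_UG (h : G) (x : Tri M) (U : Set M) :
    pastedAct h '' UG x U = UG x (h • U) := by
  simp only [UG, pastedAct, image_union, image_image, Sum.map_inl, Sum.map_inr]
  rw [← image_image Sum.inl (h * ·), image_mul_left_setOf_twoIn, ← image_image Sum.inr,
    image_smul]

lemma continuous_pastedAct [TopologicalSpace M] [ContinuousConstSMul G M] (x : Tri M) (h : G) :
    Continuous[pastedTop x, pastedTop x] (pastedAct h) := by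
  rw [pastedTop, continuous_generateFrom_iff]
  rintro s (⟨g, rfl⟩ | ⟨U, hU, rfl⟩) <;> rw [preimage_pastedAct] <;>
    refine TopologicalSpace.GenerateOpen.basic _ ?_
  · exact Or.inl ⟨h⁻¹ * g, by simp [pastedAct]⟩
  · exact Or.inr ⟨h⁻¹ • U, hU.smul h⁻¹, image_pastedAct_UG h⁻¹ x U⟩

end PastedAction

theorem pasted_action_by_homeomorphisms_general
    {G M : Type*} [Group G] [TopologicalSpace M]
    [MulAction G M]
    (hcont : ∀ g : G, Continuous fun m : M => g • m)
    (x : Tri M) (h : G) :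
    (∀ U : Set M, IsOpen U →
      pastedAct h '' (UG x U) = UG x ((fun m : M => h • m) '' U)) ∧
    @Continuous _ _ (pastedTop x) (pastedTop x) (pastedAct h) := by
  have : ContinuousConstSMul G M := ⟨hcont⟩
  exact ⟨fun U _ => image_pastedAct_UG h x U, continuous_pastedAct x h⟩

/-- A group with the convergence property acts by homeomorphisms on the compactification
`G ∪ M`; explicitly `h · Ũ_G = (hU)~_G`, and each translation is continuous (hence a
homeomorphism, its inverse being the translation by `h⁻¹`). -/
theorem pasted_action_by_homeomorphisms
    {G M : Type*} [Group G] [Countable G] [TopologicalSpace M]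
    [CompactSpace M] [TopologicalSpace.MetrizableSpace M] [MulAction G M]
    (hcont : ∀ g : G, Continuous fun m : M => g • m)
    (x : Tri M) (h : G) :
    (∀ U : Set M, IsOpen U →
      pastedAct h '' (UG x U) = UG x ((fun m : M => h • m) '' U)) ∧
    @Continuous _ _ (pastedTop x) (pastedTop x) (pastedAct h) :=
  pasted_action_by_homeomorphisms_general hcont x h
end
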